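/- For the Jacobi iteration x^k = T̃ x^{k−1} + D⁻¹ b on a triangular system Tx = b with x^0 = 0, the error satisfies x^k − T⁻¹b = −T̃^k T⁻¹ b; consequently the error is exactly zero once k ≥ n. -/
import Mathlib


open Matrix Finset

lemma strict_tri_pow_apply {n : ℕ} {F : Type*} [Field F]
    (A : Matrix (Fin n) (Fin n) F) (hA : ∀ i j : Fin n, j ≤ i → A i j = 0) :
    ∀ k : ℕ, ∀ i j : Fin n, (j : ℕ) < (i : ℕ) + k → (A ^ k) i j = 0 := by
  intro k
  induction k with
  | zero =>
    intro i j h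
    simp only [Nat.add_zero] at h
    simp [pow_zero, Matrix.one_apply, (Fin.ne_of_lt h).symm]
  | succ k ih =>
    intro i j h
    rw [pow_succ', Matrix.mul_apply]
    apply Finset.sum_eq_zero
    intro l _
    by_cases hl : l ≤ i
    · rw [hA i l hl, zero_mul]
    · push_neg at hl
      rw [ih l j (by omega), mul_zero]

lemma strict_tri_pow_zero {n : ℕ} {F : Type*} [Field F]
    (A : Matrix (Fin n) (Fin n) F) (hA : ∀ i j : Fin n, j ≤ i → A i j = 0) :
    A ^ n = 0 := by
  ext i j
  exact strict_tri_pow_apply A hA n i j (by omega)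

theorem stmt14 {n : ℕ} {F : Type*} [Field F]
    (T : Matrix (Fin n) (Fin n) F)
    (hT : ∀ i j : Fin n, j < i → T i j = 0)
    (hd : ∀ i, T i i ≠ 0)
    (b : Fin n → F) (x : ℕ → Fin n → F)
    (hx0 : x 0 = 0)
    (hx : ∀ k : ℕ,
      x (k + 1) = (1 - (Matrix.diagonal fun i => (T i i)⁻¹) * T).mulVec (x k)
        + (Matrix.diagonal fun i => (T i i)⁻¹).mulVec b) :
    (∀ k : ℕ, x k - T⁻¹.mulVec b =
      -(((1 - (Matrix.diagonal fun i => (T i i)⁻¹) * T) ^ k * T⁻¹).mulVec b)) ∧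
    (∀ k : ℕ, n ≤ k → x k = T⁻¹.mulVec b) := by
  set D : Matrix (Fin n) (Fin n) F := Matrix.diagonal fun i => (T i i)⁻¹ with hD
  set A : Matrix (Fin n) (Fin n) F := 1 - D * T with hAdef
  -- T is invertible
  have hdet : T.det = ∏ i, T i i := Matrix.det_of_upperTriangular hT
  have hdet' : IsUnit T.det := by
    rw [hdet]
    exact (Finset.prod_ne_zero_iff.mpr fun i _ => hd i).isUnit
  have hTT : T * T⁻¹ = 1 := Matrix.mul_nonsing_inv T hdet'
  -- A is strictly upper triangular
  have hA : ∀ i j : Fin n, j ≤ i → A i j = 0 := by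
    intro i j hle
    simp only [hAdef, Matrix.sub_apply, Matrix.mul_apply, hD]
    rw [Finset.sum_eq_single i]
    · rcases eq_or_lt_of_le hle with h | h
      · subst h
        simp only [Matrix.diagonal_apply_eq, Matrix.one_apply_eq]
        rw [inv_mul_cancel₀ (hd j), sub_self]
      · simp [Matrix.one_apply, (Fin.ne_of_lt h).symm, hT i j h]
    · intro l _ hl
      simp [Matrix.diagonal_apply_ne _ hl.symm]
    · simp
  -- key identity: A * T⁻¹ = T⁻¹ - D
  have hkey : A * T⁻¹ = T⁻¹ - D := by
    rw [hAdef, sub_mul, one_mul, mul_assoc, hTT, mul_one]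
  -- first part by induction
  have h1 : ∀ k : ℕ, x k - T⁻¹.mulVec b = -((A ^ k * T⁻¹).mulVec b) := by
    intro k
    induction k with
    | zero => simp [hx0]
    | succ k ih =>
      have e := sub_eq_iff_eq_add.mp ih
      have hAv : A *ᵥ (T⁻¹ *ᵥ b) = T⁻¹ *ᵥ b - D *ᵥ b := by
        rw [Matrix.mulVec_mulVec, hkey, Matrix.sub_mulVec]
      have hAw : A *ᵥ ((A ^ k * T⁻¹) *ᵥ b) = (A ^ (k + 1) * T⁻¹) *ᵥ b := by
        rw [Matrix.mulVec_mulVec, ← mul_assoc, ← pow_succ']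
      rw [hx k, e, Matrix.mulVec_add, Matrix.mulVec_neg, hAw, hAv]
      abel
  refine ⟨h1, fun k hk => ?_⟩
  have hzero : A ^ k = 0 := by
    rw [← Nat.sub_add_cancel hk, pow_add, strict_tri_pow_zero A hA, mul_zero]
  have := h1 k
  rw [hzero] at this
  simp only [Matrix.zero_mul, Matrix.zero_mulVec, neg_zero] at this
  exact sub_eq_zero.mp this
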